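/- Let S be a dense subsemigroup of (T,+), e ∈ E(T), and B ⊆ S. Then B is central near e if and only if there exist a dynamical system (X,⟨T_s⟩_{s∈S}), points x, y ∈ X, and a neighbourhood U of y such that x and y are proximal near e, y is uniformly recurrent near e, and B = {s ∈ S : T_s(x) ∈ U}. -/

import Mathlib

/-!
For a minimal idempotent `p` of `e*_S`, let `S` act on `β(S ∪ {0})` by left translation by
principal ultrafilters. The orbit of `x = pure 0` is `s ↦ pure s`, so `B` is the set of return
times of `x` to the clopen set of ultrafilters containing `B`, and `y = p` lies in that set.
Identifying `p` with its image there, `T_q = (q + ·)`, so `T_p x = p = p + p = T_p y`.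
And `y` is uniformly recurrent because for `C ∈ p` with `p` in a minimal left ideal `L`, every `q ∈ e*_S` satisfies
`p ∈ e*_S + q + p`, which makes `{s : -s + C ∈ p}` syndetic near `e` by compactness of `e*_S`.

Conversely, if `T_q x = T_q y`, the closed left ideal `e*_S + q` contains a minimal left ideal `N`.
Uniform recurrence of `y` gives `r ∈ N` with `T_r y = y`, so Ellis' theorem yields an idempotent
`p` in the compact semigroup `{r ∈ N : T_r y = y}`. Writing `p = r' + q` gives
`T_p x = T_p y = y`, hence `{s : T_s x ∈ U} ∈ p`.
-/

open Filter Topology Set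

attribute [local instance] Ultrafilter.add Ultrafilter.addSemigroup

universe u

section NearIdem

variable {T : Type u} [AddSemigroup T] [TopologicalSpace T]

/-- The set of ultrafilters on `S` converging to `e` (denoted `e*_S`). -/
def EStar (S : AddSubsemigroup T) (e : T) : Set (Ultrafilter S) :=
  {p | ∀ U ∈ nhds e, {s : S | (s : T) ∈ U} ∈ p}

/-- `B ⊆ S` is syndetic near `e`. -/
def SyndeticNear (S : AddSubsemigroup T) (e : T) (B : Set S) : Prop :=
  ∀ U ∈ nhds e, ∃ F : Finset S, (∀ t ∈ F, (t : T) ∈ U) ∧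
    ∃ V ∈ nhds e, ∀ s : S, (s : T) ∈ V → ∃ t ∈ F, t + s ∈ B

/-- `A ⊆ S` is topologically piecewise syndetic near `e`. -/
def TopPWSNear (S : AddSubsemigroup T) (e : T) (A : Set S) : Prop :=
  ∀ U ∈ nhds e, ∃ F : Finset S, (∀ t ∈ F, (t : T) ∈ U) ∧
    ∃ V ∈ nhds e, ∀ G : Finset S, ∀ O ∈ nhds e, ∃ x : S, (x : T) ∈ O ∧
      ∀ g ∈ G, (g : T) ∈ V → ∃ t ∈ F, t + (g + x) ∈ A

/-- Left ideal of a subsemigroup `E` of `βM`. -/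
def IsLeftIdealIn {M : Type*} [AddSemigroup M] (E L : Set (Ultrafilter M)) : Prop :=
  L.Nonempty ∧ L ⊆ E ∧ ∀ p ∈ E, ∀ q ∈ L, p + q ∈ L

/-- Minimal left ideal of `E`. -/
def IsMinimalLeftIdealIn {M : Type*} [AddSemigroup M] (E L : Set (Ultrafilter M)) : Prop :=
  IsLeftIdealIn E L ∧ ∀ L', IsLeftIdealIn E L' → L' ⊆ L → L' = L

/-- The smallest ideal `K(E)`, the union of all minimal left ideals of `E`. -/
def SmallestIdeal {M : Type*} [AddSemigroup M] (E : Set (Ultrafilter M)) : Set (Ultrafilter M) :=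
  {p | ∃ L, IsMinimalLeftIdealIn E L ∧ p ∈ L}

/-- `T_p(x) = p`-`lim_(s ∈ S) T_s(x)`. -/
noncomputable def TP {M : Type*} {X : Type*} [TopologicalSpace X]
    (Ts : M → X → X) (p : Ultrafilter M) (x : X) : X :=
  (p.map fun s => Ts s x).lim

/-- `x` is a uniformly recurrent point near `e`. -/
def UnifRecNear (S : AddSubsemigroup T) (e : T) {X : Type*} [TopologicalSpace X]
    (Ts : S → X → X) (x : X) : Prop :=
  ∀ W ∈ nhds x, SyndeticNear S e {s : S | Ts s x ∈ W}

/-- `x` and `y` are proximal near `e` (characterized via `e*_S`). -/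
noncomputable def ProximalNear (S : AddSubsemigroup T) (e : T) {X : Type*} [TopologicalSpace X]
    (Ts : S → X → X) (x y : X) : Prop :=
  ∃ p ∈ EStar S e, TP Ts p x = TP Ts p y

namespace Ultrafilter

variable {M : Type*} [AddSemigroup M]

theorem pure_add_pure (a b : M) : (pure a : Ultrafilter M) + pure b = pure (a + b) :=
  coe_injective <| Filter.ext' fun _ => by simp [eventually_add]

theorem add_pure_zero {M : Type*} [AddMonoid M] (u : Ultrafilter M) : u + pure 0 = u :=
  coe_injective <| Filter.ext' fun _ => by simp [eventually_add]

theorem map_add {N : Type*} [AddSemigroup N] {f : M → N} (hf : ∀ a b, f (a + b) = f a + f b)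
    (u v : Ultrafilter M) :
    (u + v).map f = u.map f + v.map f :=
  coe_injective <| Filter.ext' fun _ => by simp [eventually_add, hf]

theorem continuous_pure_add (m : M) : Continuous ((pure m : Ultrafilter M) + ·) :=
  ultrafilterBasis_is_basis.continuous_iff.2 <| Set.forall_mem_range.mpr fun A ↦
    ultrafilter_isOpen_basic {b | m + b ∈ A}

theorem isClosed_setOf_le {α : Type*} (f : Filter α) : IsClosed {u : Ultrafilter α | ↑u ≤ f} := by
  simp only [Filter.le_def, Set.ofPred_forall]
  exact isClosed_biInter fun A _ ↦ ultrafilter_isClosed_basic A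

theorem _root_.IsClosed.exists_ultrafilter_le {α : Type*} {N : Set (Ultrafilter α)}
    (hN : IsClosed N) {f : Filter α} (h : ∀ A ∈ f, ∃ u ∈ N, A ∈ u) : ∃ u ∈ N, ↑u ≤ f := by
  have : Nonempty f.sets := ⟨⟨univ, univ_mem⟩⟩
  obtain ⟨u, hu⟩ := IsCompact.nonempty_iInter_of_directed_nonempty_isCompact_isClosed
    (fun A : f.sets ↦ N ∩ {u | A.1 ∈ u})
    (fun A B ↦ ⟨⟨A.1 ∩ B.1, inter_mem A.2 B.2⟩,
      inter_subset_inter_right N fun _ h ↦ mem_of_superset h inter_subset_left,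
      inter_subset_inter_right N fun _ h ↦ mem_of_superset h inter_subset_right⟩)
    (fun A ↦ h A.1 A.2) (fun _ ↦ (hN.inter (ultrafilter_isClosed_basic _)).isCompact)
    fun _ ↦ hN.inter (ultrafilter_isClosed_basic _)
  rw [mem_iInter] at hu
  exact ⟨u, (hu ⟨univ, univ_mem⟩).1, fun A hA ↦ (hu ⟨A, hA⟩).2⟩

end Ultrafilter

section TP

variable {M X : Type*} [TopologicalSpace X] [CompactSpace X] (Ts : M → X → X)

theorem tendsto_TP (p : Ultrafilter M) (x : X) : Tendsto (Ts · x) p (𝓝 (TP Ts p x)) := by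
  have h := (p.map (Ts · x)).le_nhds_lim
  rwa [Ultrafilter.coe_map] at h

variable [T2Space X]

theorem TP_eq_iff {p : Ultrafilter M} {x z : X} : TP Ts p x = z ↔ Tendsto (Ts · x) p (𝓝 z) :=
  Ultrafilter.lim_eq_iff_le_nhds

theorem isClosed_setOf_TP_eq (x z : X) : IsClosed {p : Ultrafilter M | TP Ts p x = z} := by
  simp only [TP_eq_iff, tendsto_iff_comap]
  exact Ultrafilter.isClosed_setOf_le _

theorem TP_add [AddSemigroup M] (hc : ∀ s, Continuous (Ts s))
    (hhom : ∀ s t z, Ts s (Ts t z) = Ts (s + t) z) (p q : Ultrafilter M) (x : X) :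
    TP Ts (p + q) x = TP Ts p (TP Ts q x) := by
  rw [TP_eq_iff]
  intro W hW
  change ∀ᶠ a in (p : Filter M), ∀ᶠ b in (q : Filter M), Ts (a + b) x ∈ W
  filter_upwards [tendsto_TP Ts p _ (eventually_eventually_nhds.mpr hW)] with a ha
  filter_upwards [((hc a).tendsto _).comp (tendsto_TP Ts q x) ha] with b hb
  rw [← hhom]; exact hb

end TP

section EStar

variable {S : AddSubsemigroup T} {e : T}

theorem mem_EStar_iff_le_comap {p : Ultrafilter S} :
    p ∈ EStar S e ↔ ↑p ≤ comap ((↑) : S → T) (𝓝 e) :=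
  tendsto_iff_comap

theorem isClosed_EStar : IsClosed (EStar S e) := by
  have : EStar S e = {p : Ultrafilter S | ↑p ≤ comap ((↑) : S → T) (𝓝 e)} :=
    Set.ext fun _ ↦ mem_EStar_iff_le_comap
  rw [this]
  exact Ultrafilter.isClosed_setOf_le _

theorem add_mem_EStar (hl : ∀ t : T, Continuous fun x : T => t + x)
    (hr : ∀ t : T, Continuous fun x : T => x + t) (he : e + e = e) :
    ∀ p ∈ EStar S e, ∀ q ∈ EStar S e, p + q ∈ EStar S e := by
  intro p hp q hq U hU
  change ∀ᶠ a in (p : Filter S), ∀ᶠ b in (q : Filter S), ((a + b : S) : T) ∈ U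
  have hUe : (· + e) ⁻¹' {z | U ∈ 𝓝 z} ∈ 𝓝 e :=
    (hr e).continuousAt.preimage_mem_nhds (by rw [he]; exact eventually_mem_nhds_iff.2 hU)
  filter_upwards [hp _ hUe] with a ha
  filter_upwards [hq _ ((hl a).continuousAt.preimage_mem_nhds ha)] with b hb
  exact hb

theorem exists_mem_EStar_of_forall_nhds {D : Set S} (h : ∀ U ∈ 𝓝 e, ∃ t ∈ D, (t : T) ∈ U) :
    ∃ q ∈ EStar S e, D ∈ q := by
  have : (comap ((↑) : S → T) (𝓝 e) ⊓ 𝓟 D).NeBot := by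
    refine inf_principal_neBot_iff.2 fun V hV ↦ ?_
    obtain ⟨U, hU, hUV⟩ := mem_comap.1 hV
    obtain ⟨t, htD, htU⟩ := h U hU
    exact ⟨t, hUV htU, htD⟩
  obtain ⟨q, hq⟩ := Ultrafilter.exists_le (comap ((↑) : S → T) (𝓝 e) ⊓ 𝓟 D)
  exact ⟨q, mem_EStar_iff_le_comap.2 (hq.trans inf_le_left),
    le_principal_iff.1 (hq.trans inf_le_right)⟩

theorem syndeticNear_iff_forall_EStar {B : Set S} :
    SyndeticNear S e B ↔
      ∀ U ∈ 𝓝 e, ∀ q ∈ EStar S e, ∃ t : S, (t : T) ∈ U ∧ {s | t + s ∈ B} ∈ q := by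
  constructor
  · intro hB U hU q hq
    obtain ⟨F, hFU, V, hV, hFV⟩ := hB U hU
    have hcover : ⋃ t ∈ (F : Set S), {s | t + s ∈ B} ∈ q :=
      mem_of_superset (hq V hV) fun s hs ↦ by simpa using hFV s hs
    obtain ⟨t, htF, ht⟩ := (Ultrafilter.finite_biUnion_mem_iff F.finite_toSet).1 hcover
    exact ⟨t, hFU t htF, ht⟩
  · intro h U hU
    obtain ⟨F, hFU, hF, hcover⟩ := isClosed_EStar.isCompact.elim_finite_subcover_image
      (b := {t : S | (t : T) ∈ U}) (c := fun t ↦ {q : Ultrafilter S | {s | t + s ∈ B} ∈ q})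
      (fun t _ ↦ ultrafilter_isOpen_basic _) fun q hq ↦ by simpa using h U hU q hq
    have : ⋃ t ∈ F, {s | t + s ∈ B} ∈ comap ((↑) : S → T) (𝓝 e) :=
      mem_iff_ultrafilter.2 fun q hq ↦ (Ultrafilter.finite_biUnion_mem_iff hF).2
        (by simpa using hcover (mem_EStar_iff_le_comap.2 hq))
    obtain ⟨V, hV, hVF⟩ := mem_comap.1 this
    refine ⟨hF.toFinset, fun t ht ↦ hFU (hF.mem_toFinset.1 ht), V, hV, fun s hs ↦ ?_⟩
    simpa using hVF hs

theorem SyndeticNear.mono {B B' : Set S} (hB : SyndeticNear S e B) (h : B ⊆ B') :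
    SyndeticNear S e B' := fun U hU ↦
  let ⟨F, hFU, V, hV, hFV⟩ := hB U hU
  ⟨F, hFU, V, hV, fun s hs ↦ let ⟨t, htF, ht⟩ := hFV s hs; ⟨t, htF, h ht⟩⟩

theorem SyndeticNear.exists_add_mem {B : Set S} (hB : SyndeticNear S e B) {q : Ultrafilter S}
    (hq : q ∈ EStar S e) : ∃ r ∈ EStar S e, B ∈ r + q :=
  exists_mem_EStar_of_forall_nhds fun U hU ↦
    let ⟨t, htU, ht⟩ := syndeticNear_iff_forall_EStar.1 hB U hU q hq
    ⟨t, ht, htU⟩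

end EStar

section LeftIdeal

variable {M : Type*} [AddSemigroup M] {E L : Set (Ultrafilter M)}

theorem isLeftIdealIn_image_add_right (hE : ∀ p ∈ E, ∀ q ∈ E, p + q ∈ E) {q : Ultrafilter M}
    (hq : q ∈ E) : IsLeftIdealIn E ((· + q) '' E) := by
  refine ⟨⟨q + q, q, hq, rfl⟩, ?_, ?_⟩
  · rintro _ ⟨r, hr, rfl⟩
    exact hE r hr q hq
  · rintro r hr _ ⟨r', hr', rfl⟩
    exact ⟨r + r', hE r hr r' hr', add_assoc r r' q⟩

theorem IsLeftIdealIn.image_add_right_subset (hL : IsLeftIdealIn E L) {q : Ultrafilter M}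
    (hq : q ∈ L) : (· + q) '' E ⊆ L := by
  rintro _ ⟨r, hr, rfl⟩
  exact hL.2.2 r hr q hq

theorem IsMinimalLeftIdealIn.image_add_right_eq (hE : ∀ p ∈ E, ∀ q ∈ E, p + q ∈ E)
    (hL : IsMinimalLeftIdealIn E L) {q : Ultrafilter M} (hq : q ∈ L) : (· + q) '' E = L :=
  hL.2 _ (isLeftIdealIn_image_add_right hE (hL.1.2.1 hq)) (hL.1.image_add_right_subset hq)

theorem IsClosed.image_add_right (hE : IsClosed E) (q : Ultrafilter M) :
    IsClosed ((· + q) '' E) :=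
  (hE.isCompact.image (Ultrafilter.continuous_add_left q)).isClosed

theorem IsChain.sInter_isLeftIdealIn {c : Set (Set (Ultrafilter M))}
    (hc : c ⊆ {N | IsLeftIdealIn E N ∧ IsClosed N}) (hchain : IsChain (· ⊆ ·) c)
    (hne : c.Nonempty) : IsLeftIdealIn E (⋂₀ c) ∧ IsClosed (⋂₀ c) := by
  refine ⟨⟨?_, ?_, ?_⟩, isClosed_sInter fun N hN ↦ (hc hN).2⟩
  · have := hne.to_subtype
    rw [sInter_eq_iInter]
    exact IsCompact.nonempty_iInter_of_directed_nonempty_isCompact_isClosed _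
      (fun N N' ↦ (hchain.total N.2 N'.2).elim (fun h ↦ ⟨N, subset_rfl, h⟩)
        fun h ↦ ⟨N', h, subset_rfl⟩) (fun N ↦ (hc N.2).1.1)
      (fun N ↦ (hc N.2).2.isCompact) fun N ↦ (hc N.2).2
  · obtain ⟨N, hN⟩ := hne
    exact (sInter_subset_of_mem hN).trans (hc hN).1.2.1
  · exact fun p hp r hr ↦ mem_sInter.2 fun N hN ↦ (hc hN).1.2.2 p hp r (mem_sInter.1 hr N hN)

theorem exists_isMinimalLeftIdealIn_subset (hEc : IsClosed E)
    (hE : ∀ p ∈ E, ∀ q ∈ E, p + q ∈ E) (hL : IsLeftIdealIn E L) :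
    ∃ N ⊆ L, IsMinimalLeftIdealIn E N ∧ IsClosed N := by
  obtain ⟨q, hq⟩ := hL.1
  obtain ⟨N, hNq, hN⟩ := zorn_superset_nonempty _ (fun c hc hchain hne ↦
      ⟨⋂₀ c, IsChain.sInter_isLeftIdealIn hc hchain hne, fun _ ↦ sInter_subset_of_mem⟩) _
    ⟨isLeftIdealIn_image_add_right hE (hL.2.1 hq), hEc.image_add_right q⟩
  refine ⟨N, hNq.trans (hL.image_add_right_subset hq), ⟨hN.prop.1, fun L' hL' hL'N ↦ ?_⟩,
    hN.prop.2⟩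
  obtain ⟨q', hq'⟩ := hL'.1
  have hsub := hL'.image_add_right_subset hq'
  have hNsub := hN.2 ⟨isLeftIdealIn_image_add_right hE (hL'.2.1 hq'), hEc.image_add_right q'⟩
    (hsub.trans hL'N)
  exact hL'N.antisymm (hNsub.trans hsub)

end LeftIdeal

section Dynamics

variable {S : AddSubsemigroup T} {e : T}

theorem syndeticNear_of_mem_minimalLeftIdeal
    (hE : ∀ p ∈ EStar S e, ∀ q ∈ EStar S e, p + q ∈ EStar S e) {L : Set (Ultrafilter S)}
    (hL : IsMinimalLeftIdealIn (EStar S e) L) {p : Ultrafilter S} (hp : p ∈ L)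
    {C : Set S} (hC : C ∈ p) : SyndeticNear S e {s | {t | s + t ∈ C} ∈ p} := by
  refine syndeticNear_iff_forall_EStar.2 fun U hU q hq ↦ ?_
  have hp' : p ∈ (· + (q + p)) '' EStar S e := by
    rwa [hL.image_add_right_eq hE (hL.1.2.2 q hq p hp)]
  obtain ⟨r, hrE, hrp⟩ := hp'
  have hC' : C ∈ r + q + p := by rwa [add_assoc, show r + (q + p) = p from hrp]
  obtain ⟨t, htU, ht⟩ := Ultrafilter.nonempty_of_mem (inter_mem (hrE U hU) hC')
  exact ⟨t, htU, ht⟩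

variable {X : Type*} [TopologicalSpace X] [CompactSpace X] [T2Space X] {Ts : S → X → X}

theorem exists_TP_eq_self_of_unifRecNear {N : Set (Ultrafilter S)}
    (hN : IsLeftIdealIn (EStar S e) N) (hNc : IsClosed N) {y : X}
    (hy : UnifRecNear S e Ts y) : ∃ r ∈ N, TP Ts r y = y := by
  obtain ⟨q, hq⟩ := hN.1
  obtain ⟨r, hrN, hr⟩ := hNc.exists_ultrafilter_le (f := comap (Ts · y) (𝓝 y)) fun A hA ↦ by
    obtain ⟨W, hW, hWA⟩ := mem_comap.1 hA
    obtain ⟨r, hr, hWr⟩ := (hy W hW).exists_add_mem (hN.2.1 hq)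
    exact ⟨r + q, hN.2.2 r hr q hq, mem_of_superset hWr hWA⟩
  exact ⟨r, hrN, (TP_eq_iff Ts).2 (tendsto_iff_comap.2 hr)⟩

theorem exists_idempotent_mem_smallestIdeal_of_proximalNear
    (hE : ∀ p ∈ EStar S e, ∀ q ∈ EStar S e, p + q ∈ EStar S e)
    (hc : ∀ s, Continuous (Ts s)) (hhom : ∀ s t z, Ts s (Ts t z) = Ts (s + t) z) {x y : X}
    (hxy : ProximalNear S e Ts x y) (hy : UnifRecNear S e Ts y) {U : Set X} (hU : U ∈ 𝓝 y) :
    ∃ p ∈ SmallestIdeal (EStar S e), p + p = p ∧ {s | Ts s x ∈ U} ∈ p := by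
  obtain ⟨q, hq, hqxy⟩ := hxy
  obtain ⟨N, hNq, hN, hNc⟩ := exists_isMinimalLeftIdealIn_subset isClosed_EStar hE
    (isLeftIdealIn_image_add_right hE hq)
  obtain ⟨r, hrN, hry⟩ := exists_TP_eq_self_of_unifRecNear hN.1 hNc hy
  obtain ⟨p, ⟨hpN, hpy⟩, hpp⟩ := exists_idempotent_in_compact_add_subsemigroup
    Ultrafilter.continuous_add_left (N ∩ {u | TP Ts u y = y}) ⟨r, hrN, hry⟩
    (hNc.inter (isClosed_setOf_TP_eq Ts y y)).isCompact fun u hu v hv ↦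
      ⟨hN.1.2.2 u (hN.1.2.1 hu.1) v hv.1, by
        change TP Ts (u + v) y = y
        rw [TP_add Ts hc hhom, hv.2, hu.2]⟩
  have hpx : TP Ts p x = y := by
    obtain ⟨p', -, rfl⟩ := hNq hpN
    rwa [TP_add Ts hc hhom, hqxy, ← TP_add Ts hc hhom]
  exact ⟨p, ⟨N, hN, hpN⟩, hpp, (TP_eq_iff Ts).1 hpx hU⟩

end Dynamics

section LeftShift

variable (M : Type*) [AddSemigroup M]

/-- Adjoining `0` provides the point `pure 0`, whose orbit `s ↦ pure s` is a copy of `M`. -/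
def leftShift (s : M) (q : Ultrafilter (WithZero M)) : Ultrafilter (WithZero M) :=
  pure (s : WithZero M) + q

variable {M}

theorem continuous_leftShift (s : M) : Continuous (leftShift M s) :=
  Ultrafilter.continuous_pure_add _

theorem leftShift_leftShift (s t : M) (q : Ultrafilter (WithZero M)) :
    leftShift M s (leftShift M t q) = leftShift M (s + t) q := by
  simp only [leftShift, ← add_assoc, Ultrafilter.pure_add_pure, WithZero.coe_add]

theorem leftShift_pure_zero (s : M) : leftShift M s (pure 0) = pure ↑s :=
  Ultrafilter.add_pure_zero _

theorem mem_leftShift_map_iff {s : M} {p : Ultrafilter M} {A : Set (WithZero M)} :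
    A ∈ leftShift M s (p.map (↑)) ↔ {t | s + t ∈ (↑) ⁻¹' A} ∈ p :=
  Iff.rfl

theorem TP_leftShift (p : Ultrafilter M) (q : Ultrafilter (WithZero M)) :
    TP (leftShift M) p q = p.map (↑) + q := by
  have hpure : Tendsto (fun s : M ↦ (pure (s : WithZero M) : Ultrafilter _)) p (𝓝 (p.map (↑))) :=
    (Ultrafilter.tendsto_pure_self _).comp (by rw [Ultrafilter.coe_map]; exact tendsto_map)
  exact (TP_eq_iff _).2 (((Ultrafilter.continuous_add_left q).tendsto _).comp hpure)

end LeftShift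

section CentralSystem

variable {S : AddSubsemigroup T} {e : T}

theorem proximalNear_leftShift {p : Ultrafilter S} (hpE : p ∈ EStar S e) (hpp : p + p = p) :
    ProximalNear S e (leftShift S) (pure 0) (p.map (↑)) := by
  refine ⟨p, hpE, ?_⟩
  rw [TP_leftShift, TP_leftShift, Ultrafilter.add_pure_zero,
    ← Ultrafilter.map_add WithZero.coe_add, hpp]

theorem unifRecNear_leftShift
    (hE : ∀ p ∈ EStar S e, ∀ q ∈ EStar S e, p + q ∈ EStar S e) {L : Set (Ultrafilter S)}
    (hL : IsMinimalLeftIdealIn (EStar S e) L) {p : Ultrafilter S} (hp : p ∈ L) :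
    UnifRecNear S e (leftShift S) (p.map (↑)) := by
  intro W hW
  obtain ⟨_, ⟨A, rfl⟩, hA, hAW⟩ := ultrafilterBasis_is_basis.mem_nhds_iff.1 hW
  exact (syndeticNear_of_mem_minimalLeftIdeal hE hL hp (Ultrafilter.mem_map.1 hA)).mono
    fun s hs ↦ hAW (mem_leftShift_map_iff.2 hs)

end CentralSystem

variable [T2Space T]

theorem central_near_iff_general (S : AddSubsemigroup T)
    (hl : ∀ t : T, Continuous fun x : T => t + x)
    (hr : ∀ t : T, Continuous fun x : T => x + t)
    (e : T) (he : e + e = e)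
    (B : Set S) :
    (∃ p ∈ SmallestIdeal (EStar S e), p + p = p ∧ B ∈ p) ↔
      ∃ (X : Type u) (_ : TopologicalSpace X) (_ : CompactSpace X) (_ : T2Space X)
        (Ts : S → X → X),
        (∀ s, Continuous (Ts s)) ∧ (∀ s t z, Ts s (Ts t z) = Ts (s + t) z) ∧
        ∃ (x y : X) (U : Set X), U ∈ nhds y ∧
          ProximalNear S e Ts x y ∧ UnifRecNear S e Ts y ∧
          B = {s : S | Ts s x ∈ U} := by
  constructor
  · rintro ⟨p, ⟨L, hL, hpL⟩, hpp, hBp⟩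
    refine ⟨Ultrafilter (WithZero S), inferInstance, inferInstance, inferInstance, leftShift S,
      continuous_leftShift, leftShift_leftShift, pure 0, p.map ((↑) : S → WithZero S),
      {u | ((↑) : S → WithZero S) '' B ∈ u},
      (ultrafilter_isOpen_basic _).mem_nhds ?_, proximalNear_leftShift (hL.1.2.1 hpL) hpp,
      unifRecNear_leftShift (add_mem_EStar hl hr he) hL hpL, ?_⟩
    · change _ '' B ∈ p.map _
      rwa [Ultrafilter.mem_map, WithZero.coe_injective.preimage_image]
    · ext s
      simp [leftShift_pure_zero, WithZero.coe_injective.mem_set_image]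
  · rintro ⟨X, _, _, _, Ts, hc, hhom, x, y, U, hU, hxy, hy, rfl⟩
    exact exists_idempotent_mem_smallestIdeal_of_proximalNear (add_mem_EStar hl hr he) hc hhom
      hxy hy hU

/-- Dynamical characterization of central sets near `e`. -/
theorem central_near_iff (S : AddSubsemigroup T) (hdense : Dense (S : Set T))
    (hl : ∀ t : T, Continuous fun x : T => t + x)
    (hr : ∀ t : T, Continuous fun x : T => x + t)
    (e : T) (he : e + e = e)
    (B : Set S) :
    (∃ p ∈ SmallestIdeal (EStar S e), p + p = p ∧ B ∈ p) ↔
      ∃ (X : Type u) (_ : TopologicalSpace X) (_ : CompactSpace X) (_ : T2Space X)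
        (Ts : S → X → X),
        (∀ s, Continuous (Ts s)) ∧ (∀ s t z, Ts s (Ts t z) = Ts (s + t) z) ∧
        ∃ (x y : X) (U : Set X), U ∈ nhds y ∧
          ProximalNear S e Ts x y ∧ UnifRecNear S e Ts y ∧
          B = {s : S | Ts s x ∈ U} :=
  central_near_iff_general S hl hr e he B

end NearIdem
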